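/- arXiv:2003.10930 — 2 statements merged into one kernel-verified Lean document; each statement's English description precedes it below -/
import Mathlib

section
/- There exists a universal constant C > 0 such that for every measurable set E ⊂ ℝⁿ one has Φ(|b(E)|) ≤ C·γ(E), where γ is the standard Gaussian measure, b(E) the Gaussian barycenter of E, and Φ(ρ) = ρ/(1 + √(|log ρ|)). -/
/-!
Fix `R ≥ 1` and a vector `e` with `‖e‖ ≤ 1`. The pointwise bound `t ≤ R + R e^{R(t - R)}`,
applied to `t = ⟪e, x⟫` and integrated against the Gaussian over `E`, gives
`⟪e, b(E)⟫ ≤ R γ(E) + R e^{-R²} ∫_{ℝⁿ} e^{R⟪e, x⟫} dγ(x) ≤ R γ(E) + R e^{-R²/2}`, and with `e`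
the direction of `b(E)` this bounds `|b(E)|`. For `ρ = |b(E)| > 0` the choice
`R = 2(1 + √|log ρ|)` makes the error term `R e^{-R²/2}` at most `ρ / 2`, so
`ρ ≤ 4 (1 + √|log ρ|) γ(E)`, which is `Φ(ρ) ≤ 4 γ(E)`.
-/

open MeasureTheory Real

/-- The function `Φ(ρ) = ρ/(1 + √|log ρ|)`. -/
noncomputable def Phi (ρ : ℝ) : ℝ := ρ / (1 + Real.sqrt |Real.log ρ|)

/-- The Gaussian measure of a set `E ⊂ ℝⁿ`. -/
noncomputable def gaussVol {n : ℕ} (E : Set (EuclideanSpace ℝ (Fin n))) : ℝ :=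
  (2 * Real.pi) ^ (-(n : ℝ) / 2) * ∫ x in E, Real.exp (-‖x‖ ^ 2 / 2)

/-- The (non-renormalized) Gaussian barycenter of a set `E ⊂ ℝⁿ`. -/
noncomputable def gaussBary {n : ℕ} (E : Set (EuclideanSpace ℝ (Fin n))) :
    EuclideanSpace ℝ (Fin n) :=
  (2 * Real.pi) ^ (-(n : ℝ) / 2) • ∫ x in E, Real.exp (-‖x‖ ^ 2 / 2) • x

open scoped RealInnerProductSpace

lemma le_add_mul_exp_mul_sub {R : ℝ} (hR : 1 ≤ R) (t : ℝ) : t ≤ R + R * exp (R * (t - R)) := by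
  rcases le_or_gt t R with ht | ht
  · nlinarith [exp_pos (R * (t - R))]
  · have hR2 : 1 ≤ R * R := one_le_mul_of_one_le_of_one_le hR hR
    nlinarith [add_one_le_exp (R * (t - R)), mul_le_mul_of_nonneg_right hR2 (sub_pos.2 ht).le]

section Gaussian

variable {V : Type*} [NormedAddCommGroup V] [InnerProductSpace ℝ V]

lemma cexp_neg_mul_sq_norm_add_inner (b : ℝ) (w v : V) :
    Complex.exp (-(b : ℂ) * ‖v‖ ^ 2 + 1 * (⟪w, v⟫ : ℝ)) = (rexp (-b * ‖v‖ ^ 2 + ⟪w, v⟫) : ℂ) := by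
  push_cast; ring_nf

variable [FiniteDimensional ℝ V] [MeasurableSpace V] [BorelSpace V]

lemma integrable_exp_neg_mul_sq_norm_add_inner {b : ℝ} (hb : 0 < b) (w : V) :
    Integrable fun v : V ↦ rexp (-b * ‖v‖ ^ 2 + ⟪w, v⟫) := by
  have h := (GaussianFourier.integrable_cexp_neg_mul_sq_norm_add (V := V)
    (show 0 < (b : ℂ).re from hb) 1 w).re
  simpa only [cexp_neg_mul_sq_norm_add_inner, RCLike.re_to_complex, Complex.ofReal_re] using h

lemma integral_exp_neg_mul_sq_norm_add_inner {b : ℝ} (hb : 0 < b) (w : V) :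
    ∫ v : V, rexp (-b * ‖v‖ ^ 2 + ⟪w, v⟫) =
      (π / b) ^ (Module.finrank ℝ V / 2 : ℝ) * rexp (‖w‖ ^ 2 / (4 * b)) := by
  have h := GaussianFourier.integral_cexp_neg_mul_sq_norm_add (V := V)
    (show 0 < (b : ℂ).re from hb) 1 w
  simp only [cexp_neg_mul_sq_norm_add_inner] at h
  rw [integral_complex_ofReal] at h
  rw [← Complex.ofReal_inj, h, Complex.ofReal_mul, Complex.ofReal_cpow (by positivity),
    Complex.ofReal_exp]
  push_cast; ring_nf

lemma integrable_exp_neg_sq_norm_half : Integrable fun x : V ↦ rexp (-‖x‖ ^ 2 / 2) := by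
  simpa [neg_div, div_eq_inv_mul] using
    integrable_exp_neg_mul_sq_norm_add_inner (V := V) (b := 1 / 2) (by norm_num) 0

lemma integrable_exp_neg_sq_norm_half_smul : Integrable fun x : V ↦ rexp (-‖x‖ ^ 2 / 2) • x := by
  refine (integrable_exp_neg_mul_sq_norm_add_inner (V := V) (b := 1 / 4) (by norm_num) 0).mono'
    (by fun_prop) (.of_forall fun x ↦ ?_)
  have hx : ‖x‖ ≤ rexp (‖x‖ ^ 2 / 4) := by
    nlinarith [add_one_le_exp (‖x‖ ^ 2 / 4), sq_nonneg (‖x‖ / 2 - 1)]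
  calc ‖rexp (-‖x‖ ^ 2 / 2) • x‖ = rexp (-‖x‖ ^ 2 / 2) * ‖x‖ := by
        rw [norm_smul, norm_of_nonneg (exp_nonneg _)]
    _ ≤ rexp (-‖x‖ ^ 2 / 2) * rexp (‖x‖ ^ 2 / 4) := by gcongr
    _ = rexp (-(1 / 4) * ‖x‖ ^ 2 + ⟪(0 : V), x⟫) := by
        rw [← exp_add, inner_zero_left]; ring_nf

lemma setIntegral_exp_mul_inner_le {R : ℝ} (hR : 1 ≤ R) {e : V} (he : ‖e‖ ≤ 1) (E : Set V) :
    ∫ x in E, rexp (-‖x‖ ^ 2 / 2) * ⟪e, x⟫ ≤ R * (∫ x in E, rexp (-‖x‖ ^ 2 / 2)) +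
      R * rexp (-R ^ 2 / 2) * (2 * π) ^ (Module.finrank ℝ V / 2 : ℝ) := by
  set tilt := fun x : V ↦ rexp (-(1 / 2) * ‖x‖ ^ 2 + ⟪R • e, x⟫)
  have htilt : Integrable tilt := integrable_exp_neg_mul_sq_norm_add_inner (by norm_num) _
  have hpt : ∀ x, rexp (-‖x‖ ^ 2 / 2) * ⟪e, x⟫ ≤
      R * rexp (-‖x‖ ^ 2 / 2) + R * rexp (-R ^ 2) * tilt x := fun x ↦ by
    calc rexp (-‖x‖ ^ 2 / 2) * ⟪e, x⟫
        ≤ rexp (-‖x‖ ^ 2 / 2) * (R + R * rexp (R * (⟪e, x⟫ - R))) := by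
          gcongr; exact le_add_mul_exp_mul_sub hR _
      _ = R * rexp (-‖x‖ ^ 2 / 2) + R * rexp (-‖x‖ ^ 2 / 2 + R * (⟪e, x⟫ - R)) := by
          rw [exp_add]; ring
      _ = R * rexp (-‖x‖ ^ 2 / 2) + R * rexp (-R ^ 2) * tilt x := by
          rw [show -‖x‖ ^ 2 / 2 + R * (⟪e, x⟫ - R) = -R ^ 2 + (-(1 / 2) * ‖x‖ ^ 2 + ⟪R • e, x⟫) by
            rw [real_inner_smul_left]; ring, exp_add, mul_assoc]
  have htilt_le : ∫ x, tilt x ≤ (2 * π) ^ (Module.finrank ℝ V / 2 : ℝ) * rexp (R ^ 2 / 2) := by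
    have hnorm : ‖R • e‖ ^ 2 / (4 * (1 / 2)) ≤ R ^ 2 / 2 := by
      have he2 : ‖e‖ ^ 2 ≤ 1 := pow_le_one₀ (norm_nonneg e) he
      rw [norm_smul, norm_of_nonneg (by linarith), mul_pow]
      nlinarith [sq_nonneg R]
    rw [integral_exp_neg_mul_sq_norm_add_inner (by norm_num), show π / (1 / 2) = 2 * π by ring]
    exact mul_le_mul_of_nonneg_left (exp_le_exp.2 hnorm) (by positivity)
  have hgauss := integrable_exp_neg_sq_norm_half (V := V)
  have hlhs : Integrable fun x : V ↦ rexp (-‖x‖ ^ 2 / 2) * ⟪e, x⟫ := by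
    simpa only [real_inner_smul_right] using
      integrable_exp_neg_sq_norm_half_smul.const_inner (𝕜 := ℝ) e
  calc ∫ x in E, rexp (-‖x‖ ^ 2 / 2) * ⟪e, x⟫
      ≤ ∫ x in E, (R * rexp (-‖x‖ ^ 2 / 2) + R * rexp (-R ^ 2) * tilt x) :=
        setIntegral_mono hlhs.integrableOn
          ((hgauss.const_mul R).add (htilt.const_mul _)).integrableOn hpt
    _ = R * (∫ x in E, rexp (-‖x‖ ^ 2 / 2)) + R * rexp (-R ^ 2) * ∫ x in E, tilt x := by
        rw [integral_add (hgauss.const_mul R).integrableOn (htilt.const_mul _).integrableOn,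
          integral_const_mul, integral_const_mul]
    _ ≤ R * (∫ x in E, rexp (-‖x‖ ^ 2 / 2)) +
          R * rexp (-R ^ 2) * ((2 * π) ^ (Module.finrank ℝ V / 2 : ℝ) * rexp (R ^ 2 / 2)) := by
        gcongr
        exact (setIntegral_le_integral htilt (.of_forall fun x ↦ exp_nonneg _)).trans htilt_le
    _ = R * (∫ x in E, rexp (-‖x‖ ^ 2 / 2)) +
          R * rexp (-R ^ 2 / 2) * (2 * π) ^ (Module.finrank ℝ V / 2 : ℝ) := by
        rw [show -R ^ 2 / 2 = -R ^ 2 + R ^ 2 / 2 by ring, exp_add]; ring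

lemma norm_setIntegral_exp_smul_le {R : ℝ} (hR : 1 ≤ R) (E : Set V) :
    ‖∫ x in E, rexp (-‖x‖ ^ 2 / 2) • x‖ ≤ R * (∫ x in E, rexp (-‖x‖ ^ 2 / 2)) +
      R * rexp (-R ^ 2 / 2) * (2 * π) ^ (Module.finrank ℝ V / 2 : ℝ) := by
  set I := ∫ x in E, rexp (-‖x‖ ^ 2 / 2) • x
  have hunit : ‖‖I‖⁻¹ • I‖ ≤ 1 := by
    rw [norm_smul, norm_inv, norm_norm]
    exact inv_mul_le_one
  calc ‖I‖ = ⟪‖I‖⁻¹ • I, I⟫ := by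
        rw [real_inner_smul_left, real_inner_self_eq_norm_sq, sq, ← mul_assoc, inv_mul_mul_self]
    _ = ∫ x in E, rexp (-‖x‖ ^ 2 / 2) * ⟪‖I‖⁻¹ • I, x⟫ := by
        rw [← integral_inner integrable_exp_neg_sq_norm_half_smul.integrableOn]
        simp only [real_inner_smul_right]
    _ ≤ _ := setIntegral_exp_mul_inner_le hR hunit E

end Gaussian

lemma gaussVol_nonneg {n : ℕ} (E : Set (EuclideanSpace ℝ (Fin n))) : 0 ≤ gaussVol E :=
  mul_nonneg (by positivity) (integral_nonneg fun _ ↦ exp_nonneg _)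

lemma norm_gaussBary_le {n : ℕ} {R : ℝ} (hR : 1 ≤ R) (E : Set (EuclideanSpace ℝ (Fin n))) :
    ‖gaussBary E‖ ≤ R * gaussVol E + R * rexp (-R ^ 2 / 2) := by
  have hc : 0 < (2 * π) ^ (-(n : ℝ) / 2) := by positivity
  have hcancel : (2 * π) ^ (-(n : ℝ) / 2) * (2 * π) ^ ((n : ℝ) / 2) = 1 := by
    rw [← rpow_add (by positivity), neg_div, neg_add_cancel, rpow_zero]
  have h := norm_setIntegral_exp_smul_le hR E
  rw [finrank_euclideanSpace_fin] at h
  rw [gaussBary, gaussVol, norm_smul, norm_of_nonneg hc.le]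
  calc _ ≤ (2 * π) ^ (-(n : ℝ) / 2) * (R * (∫ x in E, rexp (-‖x‖ ^ 2 / 2)) +
          R * rexp (-R ^ 2 / 2) * (2 * π) ^ ((n : ℝ) / 2)) := by gcongr
    _ = _ := by linear_combination R * rexp (-R ^ 2 / 2) * hcancel

lemma two_mul_mul_exp_neg_sq_half_le {s : ℝ} (hs : 0 ≤ s) :
    2 * (2 * (1 + s)) * exp (-(2 * (1 + s)) ^ 2 / 2) ≤ exp (-s ^ 2) := by
  have hs1 : 1 + s ≤ exp s := by linarith [add_one_le_exp s]
  have he : 4 ≤ exp 2 := by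
    have := add_one_le_exp 1
    rw [show (2:ℝ) = 1 + 1 by norm_num, exp_add]; nlinarith
  calc 2 * (2 * (1 + s)) * exp (-(2 * (1 + s)) ^ 2 / 2)
      = 4 * (1 + s) * exp (-(2 * (1 + s)) ^ 2 / 2) := by ring
    _ ≤ 4 * exp s * exp (-(2 * (1 + s)) ^ 2 / 2) := by gcongr
    _ = 4 * exp (-2) * exp (-s ^ 2 - (3 * s + s ^ 2)) := by
        rw [mul_assoc, ← exp_add, mul_assoc, ← exp_add]; ring_nf
    _ ≤ exp 2 * exp (-2) * exp (-s ^ 2) := by gcongr; nlinarith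
    _ = exp (-s ^ 2) := by rw [← exp_add]; simp

lemma Phi_le_of_forall_le_mul_add {ρ m : ℝ} (hρ : 0 ≤ ρ) (hm : 0 ≤ m)
    (h : ∀ R, 1 ≤ R → ρ ≤ R * m + R * exp (-R ^ 2 / 2)) : Phi ρ ≤ 4 * m := by
  rcases hρ.eq_or_lt with rfl | hρ
  · simpa [Phi] using hm
  set s := √|log ρ| with hs
  have hs0 : 0 ≤ s := sqrt_nonneg _
  have hρs : exp (-s ^ 2) ≤ ρ := by
    rw [hs, sq_sqrt (abs_nonneg _)]
    calc exp (-|log ρ|) ≤ exp (log ρ) := exp_le_exp.2 (neg_abs_le _)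
      _ = ρ := exp_log hρ
  have hbound := h (2 * (1 + s)) (by linarith)
  have htail := two_mul_mul_exp_neg_sq_half_le hs0
  rw [Phi, div_le_iff₀ (by positivity)]
  linarith

theorem Phi_barycenter_le_gaussVol :
    ∃ C > 0, ∀ (n : ℕ) (E : Set (EuclideanSpace ℝ (Fin n))), MeasurableSet E →
      Phi ‖gaussBary E‖ ≤ C * gaussVol E := by
  refine ⟨4, by norm_num, fun n E _ ↦ ?_⟩
  exact Phi_le_of_forall_le_mul_add (norm_nonneg _) (gaussVol_nonneg E)
    fun R hR ↦ norm_gaussBary_le hR E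
end

section
/- Let T > 1 and let ε(T) > 0 be defined by ∫_T^{∞} e^{-t²/2} dt = ∫_{-1}^{-1+ε(T)} e^{-t²/2} dt. Then for T sufficiently large: (i) e^{-T²/2} ≥ T·(e^{-(ε(T)-1)²/2} − e^{-1/2}); (ii) e^{-T²/2} ≤ 4T·(e^{-(ε(T)-1)²/2} − e^{-1/2}); and consequently there is c > 0 with c·T·ε(T) ≥ e^{-T²/2} ≥ e^{-T²} and ε(T) → 0 as T → ∞. -/
/-!
Both sides of the mass balance are compared with `e^{-T²/2}/T`. On the tail, `-e^{-t²/2}/t`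
is an antiderivative of `(1 + t⁻²) e^{-t²/2}`, and the weight `1 + t⁻²` lies between `1` and
`1 + T⁻² ≤ 2`, so the tail mass lies between `e^{-T²/2}/(2T)` and `e^{-T²/2}/T`; in particular
it is positive, which forces `ε(T) > 0`. On `[-1, -1 + ε]` the density lies between
`-t e^{-t²/2}`, whose integral is `e^{-(ε-1)²/2} - e^{-1/2}`, and twice that as long as
`t ≤ -1/2`; it also lies between `e^{-1/2}` and `1`, so the mass there is comparable to `ε`.
For `T ≥ 2` the tail is smaller than the mass of `[-1, -1/2]`, whence `ε(T) ≤ 1/2`.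
-/

open MeasureTheory Real Filter Set

section Gaussian

variable {T : ℝ}

lemma continuous_exp_neg_sq_div_two : Continuous fun t : ℝ => exp (-t ^ 2 / 2) := by
  fun_prop

lemma integrable_exp_neg_sq_div_two : Integrable fun t : ℝ => exp (-t ^ 2 / 2) := by
  convert integrable_exp_neg_mul_sq (show (0 : ℝ) < 1 / 2 by norm_num) using 3 with t
  ring

lemma hasDerivAt_exp_neg_sq_div_two (x : ℝ) :
    HasDerivAt (fun t : ℝ => exp (-t ^ 2 / 2)) (-x * exp (-x ^ 2 / 2)) x := by
  have h : HasDerivAt (fun t : ℝ => -t ^ 2 / 2) (-x) x :=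
    ((hasDerivAt_pow 2 x).neg.div_const 2).congr_deriv (by norm_num; ring)
  exact h.exp.congr_deriv (by ring)

lemma tendsto_exp_neg_sq_div_two_atTop :
    Tendsto (fun t : ℝ => exp (-t ^ 2 / 2)) atTop (nhds 0) := by
  refine tendsto_exp_atBot.comp ?_
  simpa [neg_div] using tendsto_neg_atBot_iff.mpr
    ((tendsto_pow_atTop two_ne_zero).atTop_div_const (two_pos : (0 : ℝ) < 2))

lemma integrableOn_one_add_inv_sq_mul_exp_neg_sq_div_two (hT : 0 < T) :
    IntegrableOn (fun t : ℝ => (1 + (t ^ 2)⁻¹) * exp (-t ^ 2 / 2)) (Ioi T) := by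
  refine (integrable_exp_neg_sq_div_two.const_mul (1 + (T ^ 2)⁻¹)).integrableOn.mono' ?_ ?_
  · refine ContinuousOn.aestronglyMeasurable ?_ measurableSet_Ioi
    refine ContinuousOn.mul ?_ continuous_exp_neg_sq_div_two.continuousOn
    exact continuousOn_const.add <| (continuous_pow 2).continuousOn.inv₀ fun t ht =>
      pow_ne_zero 2 (hT.trans ht).ne'
  · filter_upwards [ae_restrict_mem measurableSet_Ioi] with t ht
    rw [Real.norm_of_nonneg (by positivity)]
    gcongr
    exact ht.le

lemma integral_Ioi_one_add_inv_sq_mul_exp_neg_sq_div_two (hT : 0 < T) :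
    ∫ t in Ioi T, (1 + (t ^ 2)⁻¹) * exp (-t ^ 2 / 2) = exp (-T ^ 2 / 2) / T := by
  have hderiv : ∀ x ∈ Ioi T, HasDerivAt (fun t : ℝ => -(exp (-t ^ 2 / 2) / t))
      ((1 + (x ^ 2)⁻¹) * exp (-x ^ 2 / 2)) x := fun x hx => by
    have hx : x ≠ 0 := (hT.trans hx).ne'
    refine ((hasDerivAt_exp_neg_sq_div_two x).div (hasDerivAt_id' x) hx).neg.congr_deriv ?_
    field_simp
    ring
  have hlim : Tendsto (fun t : ℝ => -(exp (-t ^ 2 / 2) / t)) atTop (nhds 0) := by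
    simpa [div_eq_mul_inv] using (tendsto_exp_neg_sq_div_two_atTop.mul tendsto_inv_atTop_zero).neg
  have hcont : ContinuousAt (fun t : ℝ => -(exp (-t ^ 2 / 2) / t)) T := by
    fun_prop (disch := exact hT.ne')
  rw [integral_Ioi_of_hasDerivAt_of_tendsto hcont.continuousWithinAt hderiv
    (integrableOn_one_add_inv_sq_mul_exp_neg_sq_div_two hT) hlim]
  ring

lemma integral_Ioi_exp_neg_sq_div_two_le (hT : 0 < T) :
    ∫ t in Ioi T, exp (-t ^ 2 / 2) ≤ exp (-T ^ 2 / 2) / T := by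
  rw [← integral_Ioi_one_add_inv_sq_mul_exp_neg_sq_div_two hT]
  refine setIntegral_mono_on integrable_exp_neg_sq_div_two.integrableOn
    (integrableOn_one_add_inv_sq_mul_exp_neg_sq_div_two hT) measurableSet_Ioi fun t _ => ?_
  exact le_mul_of_one_le_left (exp_pos _).le (le_add_of_nonneg_right (by positivity))

lemma exp_neg_sq_div_two_div_le_integral_Ioi (hT : 0 < T) :
    exp (-T ^ 2 / 2) / T ≤ (1 + (T ^ 2)⁻¹) * ∫ t in Ioi T, exp (-t ^ 2 / 2) := by
  rw [← integral_Ioi_one_add_inv_sq_mul_exp_neg_sq_div_two hT, ← integral_const_mul]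
  refine setIntegral_mono_on (integrableOn_one_add_inv_sq_mul_exp_neg_sq_div_two hT)
    (integrable_exp_neg_sq_div_two.const_mul _).integrableOn measurableSet_Ioi fun t ht => ?_
  gcongr
  exact ht.le

lemma exp_neg_sq_div_two_div_le_two_mul_integral_Ioi (hT : 1 ≤ T) :
    exp (-T ^ 2 / 2) / T ≤ 2 * ∫ t in Ioi T, exp (-t ^ 2 / 2) := by
  refine (exp_neg_sq_div_two_div_le_integral_Ioi (by linarith)).trans ?_
  have hweight : 1 + (T ^ 2)⁻¹ ≤ 2 := by
    linarith [inv_le_one_of_one_le₀ (one_le_pow₀ hT : (1 : ℝ) ≤ T ^ 2)]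
  gcongr

end Gaussian

section Interval

variable {a b : ℝ}

lemma integral_neg_mul_exp_neg_sq_div_two (a b : ℝ) :
    ∫ t in a..b, -t * exp (-t ^ 2 / 2) = exp (-b ^ 2 / 2) - exp (-a ^ 2 / 2) :=
  intervalIntegral.integral_eq_sub_of_hasDerivAt (fun x _ => hasDerivAt_exp_neg_sq_div_two x)
    (Continuous.intervalIntegrable (by fun_prop) a b)

lemma integral_neg_mul_exp_neg_sq_div_two_le (ha : -1 ≤ a) (hab : a ≤ b) :
    ∫ t in a..b, -t * exp (-t ^ 2 / 2) ≤ ∫ t in a..b, exp (-t ^ 2 / 2) := by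
  refine intervalIntegral.integral_mono_on hab (Continuous.intervalIntegrable (by fun_prop) _ _)
    (continuous_exp_neg_sq_div_two.intervalIntegrable _ _) fun t ht => ?_
  exact mul_le_of_le_one_left (exp_pos _).le (by linarith [ht.1])

lemma integral_exp_neg_sq_div_two_le_two_mul (hab : a ≤ b) (hb : b ≤ -1 / 2) :
    ∫ t in a..b, exp (-t ^ 2 / 2) ≤ 2 * ∫ t in a..b, -t * exp (-t ^ 2 / 2) := by
  rw [← intervalIntegral.integral_const_mul]
  refine intervalIntegral.integral_mono_on hab
    (continuous_exp_neg_sq_div_two.intervalIntegrable _ _)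
    (Continuous.intervalIntegrable (by fun_prop) _ _) fun t ht => ?_
  rw [← mul_assoc]
  exact le_mul_of_one_le_left (exp_pos _).le (by linarith [ht.2])

lemma integral_exp_neg_sq_div_two_le_sub (hab : a ≤ b) :
    ∫ t in a..b, exp (-t ^ 2 / 2) ≤ b - a := by
  refine (intervalIntegral.integral_mono_on hab
    (continuous_exp_neg_sq_div_two.intervalIntegrable _ _) intervalIntegrable_const
    fun t _ => exp_le_one_iff.mpr (by nlinarith [sq_nonneg t] : -t ^ 2 / 2 ≤ 0)).trans_eq ?_
  simp

lemma sub_mul_exp_le_integral_exp_neg_sq_div_two (ha : -1 ≤ a) (hab : a ≤ b) (hb : b ≤ 1) :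
    (b - a) * exp (-1 / 2) ≤ ∫ t in a..b, exp (-t ^ 2 / 2) := by
  refine le_of_eq_of_le ?_ (intervalIntegral.integral_mono_on hab intervalIntegrable_const
    (continuous_exp_neg_sq_div_two.intervalIntegrable _ _)
    fun t ht => exp_le_exp.mpr (by nlinarith [ht.1, ht.2] : -1 / 2 ≤ -t ^ 2 / 2))
  simp

end Interval

section MassBalance

variable {T ε : ℝ}

lemma exp_sub_exp_eq_integral_neg_mul_exp_neg_sq_div_two (ε : ℝ) :
    exp (-(ε - 1) ^ 2 / 2) - exp (-1 / 2) = ∫ t in (-1)..(-1 + ε), -t * exp (-t ^ 2 / 2) := by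
  rw [integral_neg_mul_exp_neg_sq_div_two]
  ring_nf

lemma pos_of_integral_Ioi_eq_integral_Ioo (hT : 0 < T)
    (h : ∫ t in Ioi T, exp (-t ^ 2 / 2) = ∫ t in Ioo (-1) (-1 + ε), exp (-t ^ 2 / 2)) :
    0 < ε := by
  by_contra! hε
  rw [Ioo_eq_empty (by linarith), Measure.restrict_empty, integral_zero_measure] at h
  have hlower := exp_neg_sq_div_two_div_le_integral_Ioi hT
  rw [h, mul_zero] at hlower
  exact hlower.not_gt (by positivity)

lemma le_half_of_integral_Ioi_eq (hT : 2 ≤ T)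
    (h : ∫ t in Ioi T, exp (-t ^ 2 / 2) = ∫ t in (-1)..(-1 + ε), exp (-t ^ 2 / 2)) :
    ε ≤ 1 / 2 := by
  by_contra! hε
  have hleft : 1 / 2 * exp (-1 / 2) ≤ ∫ t in (-1)..(-1 + ε), exp (-t ^ 2 / 2) :=
    calc 1 / 2 * exp (-1 / 2) = (-1 / 2 - -1) * exp (-1 / 2) := by norm_num
      _ ≤ ∫ t in (-1)..(-1 / 2), exp (-t ^ 2 / 2) :=
        sub_mul_exp_le_integral_exp_neg_sq_div_two le_rfl (by norm_num) (by norm_num)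
      _ ≤ ∫ t in (-1)..(-1 + ε), exp (-t ^ 2 / 2) :=
        intervalIntegral.integral_mono_interval le_rfl (by norm_num) (by linarith)
          (Eventually.of_forall fun t => (exp_pos _).le)
          (continuous_exp_neg_sq_div_two.intervalIntegrable _ _)
  have hright : ∫ t in Ioi T, exp (-t ^ 2 / 2) ≤ exp (-2) / 2 :=
    (integral_Ioi_exp_neg_sq_div_two_le (by linarith)).trans
      (div_le_div₀ (exp_pos _).le (exp_le_exp.mpr (by nlinarith)) two_pos hT)
  have hexp : exp (-2) < exp (-1 / 2) := exp_lt_exp.mpr (by norm_num)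
  linarith

lemma mul_exp_sub_exp_le_of_integral_Ioi_eq (hT : 0 < T) (hε : 0 ≤ ε)
    (h : ∫ t in Ioi T, exp (-t ^ 2 / 2) = ∫ t in (-1)..(-1 + ε), exp (-t ^ 2 / 2)) :
    T * (exp (-(ε - 1) ^ 2 / 2) - exp (-1 / 2)) ≤ exp (-T ^ 2 / 2) := by
  rw [mul_comm, ← le_div_iff₀ hT, exp_sub_exp_eq_integral_neg_mul_exp_neg_sq_div_two]
  calc _ ≤ ∫ t in (-1)..(-1 + ε), exp (-t ^ 2 / 2) :=
        integral_neg_mul_exp_neg_sq_div_two_le le_rfl (by linarith)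
    _ = ∫ t in Ioi T, exp (-t ^ 2 / 2) := h.symm
    _ ≤ _ := integral_Ioi_exp_neg_sq_div_two_le hT

lemma exp_le_four_mul_mul_exp_sub_exp_of_integral_Ioi_eq (hT : 1 ≤ T) (hε : 0 ≤ ε)
    (hε' : ε ≤ 1 / 2)
    (h : ∫ t in Ioi T, exp (-t ^ 2 / 2) = ∫ t in (-1)..(-1 + ε), exp (-t ^ 2 / 2)) :
    exp (-T ^ 2 / 2) ≤ 4 * T * (exp (-(ε - 1) ^ 2 / 2) - exp (-1 / 2)) := by
  rw [mul_comm 4, mul_assoc, ← div_le_iff₀' (by linarith),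
    exp_sub_exp_eq_integral_neg_mul_exp_neg_sq_div_two]
  calc _ ≤ 2 * ∫ t in Ioi T, exp (-t ^ 2 / 2) :=
        exp_neg_sq_div_two_div_le_two_mul_integral_Ioi hT
    _ = 2 * ∫ t in (-1)..(-1 + ε), exp (-t ^ 2 / 2) := by rw [h]
    _ ≤ _ := by
      linarith [integral_exp_neg_sq_div_two_le_two_mul (a := -1) (b := -1 + ε) (by linarith)
        (by linarith)]

lemma exp_le_two_mul_mul_of_integral_Ioi_eq (hT : 1 ≤ T) (hε : 0 ≤ ε)
    (h : ∫ t in Ioi T, exp (-t ^ 2 / 2) = ∫ t in (-1)..(-1 + ε), exp (-t ^ 2 / 2)) :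
    exp (-T ^ 2 / 2) ≤ 2 * T * ε := by
  rw [mul_comm 2, mul_assoc, ← div_le_iff₀' (by linarith)]
  calc _ ≤ 2 * ∫ t in Ioi T, exp (-t ^ 2 / 2) :=
        exp_neg_sq_div_two_div_le_two_mul_integral_Ioi hT
    _ ≤ 2 * ε := by
      rw [h]
      linarith [integral_exp_neg_sq_div_two_le_sub (a := -1) (b := -1 + ε) (by linarith)]

lemma le_exp_mul_exp_neg_sq_div_two_div_of_integral_Ioi_eq (hT : 0 < T) (hε : 0 ≤ ε)
    (hε' : ε ≤ 2)
    (h : ∫ t in Ioi T, exp (-t ^ 2 / 2) = ∫ t in (-1)..(-1 + ε), exp (-t ^ 2 / 2)) :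
    ε ≤ exp (1 / 2) * (exp (-T ^ 2 / 2) / T) := by
  rw [← div_le_iff₀' (exp_pos _), div_eq_mul_inv, ← exp_neg,
    show -(1 / 2 : ℝ) = -1 / 2 by norm_num]
  calc ε * exp (-1 / 2) = (-1 + ε - -1) * exp (-1 / 2) := by ring
    _ ≤ ∫ t in (-1)..(-1 + ε), exp (-t ^ 2 / 2) :=
      sub_mul_exp_le_integral_exp_neg_sq_div_two le_rfl (by linarith) (by linarith)
    _ = ∫ t in Ioi T, exp (-t ^ 2 / 2) := h.symm
    _ ≤ _ := integral_Ioi_exp_neg_sq_div_two_le hT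

end MassBalance

theorem epsT_asymptotics_general (ε : ℝ → ℝ)
    (heq : ∀ T > 1, (∫ t in Set.Ioi T, Real.exp (-t ^ 2 / 2))
      = ∫ t in Set.Ioo (-1 : ℝ) (-1 + ε T), Real.exp (-t ^ 2 / 2)) :
    (∃ T₀ : ℝ, ∀ T ≥ T₀,
      T * (Real.exp (-(ε T - 1) ^ 2 / 2) - Real.exp (-1 / 2)) ≤ Real.exp (-T ^ 2 / 2) ∧
      Real.exp (-T ^ 2 / 2) ≤ 4 * T * (Real.exp (-(ε T - 1) ^ 2 / 2) - Real.exp (-1 / 2))) ∧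
    (∃ c > 0, ∃ T₁ : ℝ, ∀ T ≥ T₁,
      Real.exp (-T ^ 2 / 2) ≤ c * T * ε T ∧ Real.exp (-T ^ 2) ≤ Real.exp (-T ^ 2 / 2)) ∧
    Tendsto ε atTop (nhds 0) := by
  have hbalance : ∀ T ≥ 2, 0 < ε T ∧ ε T ≤ 1 / 2 ∧
      ∫ t in Ioi T, exp (-t ^ 2 / 2) = ∫ t in (-1)..(-1 + ε T), exp (-t ^ 2 / 2) := by
    intro T hT
    have hε := pos_of_integral_Ioi_eq_integral_Ioo (by linarith) (heq T (by linarith))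
    have h := (heq T (by linarith)).trans <|
      integral_Ioc_eq_integral_Ioo.symm.trans (intervalIntegral.integral_of_le (by linarith)).symm
    exact ⟨hε, le_half_of_integral_Ioi_eq hT h, h⟩
  refine ⟨⟨2, fun T hT => ?_⟩, ⟨2, two_pos, 2, fun T hT => ⟨?_, ?_⟩⟩, ?_⟩
  · obtain ⟨hε, hε', h⟩ := hbalance T hT
    exact ⟨mul_exp_sub_exp_le_of_integral_Ioi_eq (by linarith) hε.le h,
      exp_le_four_mul_mul_exp_sub_exp_of_integral_Ioi_eq (by linarith) hε.le hε' h⟩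
  · obtain ⟨hε, -, h⟩ := hbalance T hT
    exact exp_le_two_mul_mul_of_integral_Ioi_eq (by linarith) hε.le h
  · exact exp_le_exp.mpr (by nlinarith [sq_nonneg T])
  have hlim := (tendsto_exp_neg_sq_div_two_atTop.div_atTop tendsto_id).const_mul (exp (1 / 2))
  rw [mul_zero] at hlim
  refine squeeze_zero' ?_ ?_ hlim
  · filter_upwards [eventually_ge_atTop 2] with T hT using (hbalance T hT).1.le
  · filter_upwards [eventually_ge_atTop 2] with T hT
    obtain ⟨hε, hε', h⟩ := hbalance T hT
    exact le_exp_mul_exp_neg_sq_div_two_div_of_integral_Ioi_eq (by linarith) hε.le (by linarith) h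

/-- Asymptotics for `ε(T)` defined by the mass-balance equation
`∫_T^∞ e^{-t²/2} dt = ∫_{-1}^{-1+ε(T)} e^{-t²/2} dt`. -/
theorem epsT_asymptotics (ε : ℝ → ℝ) (hpos : ∀ T > 1, 0 < ε T)
    (heq : ∀ T > 1, (∫ t in Set.Ioi T, Real.exp (-t ^ 2 / 2))
      = ∫ t in Set.Ioo (-1 : ℝ) (-1 + ε T), Real.exp (-t ^ 2 / 2)) :
    (∃ T₀ : ℝ, ∀ T ≥ T₀,
      T * (Real.exp (-(ε T - 1) ^ 2 / 2) - Real.exp (-1 / 2)) ≤ Real.exp (-T ^ 2 / 2) ∧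
      Real.exp (-T ^ 2 / 2) ≤ 4 * T * (Real.exp (-(ε T - 1) ^ 2 / 2) - Real.exp (-1 / 2))) ∧
    (∃ c > 0, ∃ T₁ : ℝ, ∀ T ≥ T₁,
      Real.exp (-T ^ 2 / 2) ≤ c * T * ε T ∧ Real.exp (-T ^ 2) ≤ Real.exp (-T ^ 2 / 2)) ∧
    Tendsto ε atTop (nhds 0) :=
  epsT_asymptotics_general ε heq
end
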